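/- Let δ ∈ (0,1) and S(a) = √(1 − 4a + 4(1−δ²)a²). The function G(a) = [ (1−2a+S(a)) (1−S(a))^{1+δ} ] / [ (1−2a−S(a)) (1+S(a))^{1+δ} ] is strictly decreasing on the open interval (0, 1/(2+2δ)), and its limit as a → 1/(2+2δ) is 1. Consequently G(a) > 1 for a ∈ (0, 1/(2+2δ)). -/

import Mathlib

open Real Filter

/-- `S(a) = √(1 − 4a + 4(1−δ²)a²)`. -/
noncomputable def Sf (δ a : ℝ) : ℝ := Real.sqrt (1 - 4*a + 4*(1-δ^2)*a^2)

/-- The ratio function `G` from equation (eq:finala). -/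
noncomputable def G (δ a : ℝ) : ℝ :=
  ((1 - 2*a + Sf δ a) * (1 - Sf δ a) ^ (1+δ)) / ((1 - 2*a - Sf δ a) * (1 + Sf δ a) ^ (1+δ))

/-!
The radicand of `S` is `(1 − 2a)² − (2δa)²`, so `0 < S < 1 − 2a` on the interval and `S`
vanishes at `a₀ = 1/(2+2δ)`, where `G(a₀) = 1`. Taking logarithms, `G = exp L` on `(0, a₀]`
with `L = logG δ`, and `S S' = −2 + 4(1−δ²)a` gives
`L'(a) = (δ − 1 − 2δ(1−δ²)a) / (a S (1 − (1−δ²)a)) < 0`. Hence `G` is continuous and strictly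
decreasing on the half-closed interval `(0, a₀]`, and all three claims follow.
-/

open Set

noncomputable def logG (δ a : ℝ) : ℝ :=
  log (1 - 2*a + Sf δ a) - log (1 - 2*a - Sf δ a) + (1+δ) * (log (1 - Sf δ a) - log (1 + Sf δ a))

lemma radicand_eq (δ a : ℝ) :
    1 - 4*a + 4*(1-δ^2)*a^2 = (1 - 2*a - 2*δ*a) * (1 - 2*a + 2*δ*a) := by
  ring

lemma radicand_pos {δ a : ℝ} (hδa : 0 ≤ δ * a) (h : 2*a + 2*δ*a < 1) :
    0 < 1 - 4*a + 4*(1-δ^2)*a^2 := by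
  rw [radicand_eq]; exact mul_pos (by linarith) (by linarith)

@[fun_prop]
lemma continuous_Sf (δ : ℝ) : Continuous (Sf δ) := by
  unfold Sf; fun_prop

lemma Sf_lt_one_sub_two_mul {δ a : ℝ} (hδa : δ * a ≠ 0) (ha : 2 * a < 1) :
    Sf δ a < 1 - 2 * a := by
  rw [Sf, sqrt_lt' (by linarith)]
  nlinarith [sq_pos_of_ne_zero hδa]

lemma Sf_one_div_two_add_two_mul {δ : ℝ} (hδ : 1 + δ ≠ 0) : Sf δ (1 / (2 + 2 * δ)) = 0 := by
  have : 1 - 4 * (1 / (2 + 2 * δ)) + 4 * (1 - δ^2) * (1 / (2 + 2 * δ))^2 = 0 := by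
    field_simp; ring
  rw [Sf, this, sqrt_zero]

lemma hasDerivAt_Sf {δ a : ℝ} (h : 0 < 1 - 4*a + 4*(1-δ^2)*a^2) :
    HasDerivAt (Sf δ) ((-2 + 4*(1-δ^2)*a) / Sf δ a) a := by
  have hQ : HasDerivAt (fun x : ℝ => 1 - 4*x + 4*(1-δ^2)*x^2) (-4 + 8*(1-δ^2)*a) a := by
    refine (((hasDerivAt_id' a).const_mul 4 |>.const_sub 1).add
      ((hasDerivAt_pow 2 a).const_mul (4*(1-δ^2)))).congr_deriv ?_
    norm_num; ring
  refine (hQ.sqrt h.ne').congr_deriv ?_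
  unfold Sf; field_simp; ring

section

variable {δ a : ℝ} (ha : 0 ≤ a) (h : Sf δ a < 1 - 2 * a)
include ha h

lemma G_eq_exp_logG : G δ a = exp (logG δ a) := by
  have hS : 0 ≤ Sf δ a := sqrt_nonneg _
  have h1 : 0 < 1 - Sf δ a := by linarith
  have h2 : 0 < 1 + Sf δ a := by linarith
  have h3 : 0 < 1 - 2*a - Sf δ a := by linarith
  have h4 : 0 < 1 - 2*a + Sf δ a := by linarith
  rw [G, rpow_def_of_pos h1, rpow_def_of_pos h2, logG, exp_add, exp_sub, exp_log h4, exp_log h3,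
    mul_sub, exp_sub, mul_comm (1 + δ), mul_comm (1 + δ)]
  field_simp

lemma continuousAt_logG : ContinuousAt (logG δ) a := by
  have hS : 0 ≤ Sf δ a := sqrt_nonneg _
  unfold logG
  fun_prop (disch := exact ne_of_gt (by linarith))

end

lemma hasDerivAt_logG {δ a : ℝ} (hδ : 0 < δ) (ha : 0 < a) (h : 2*a + 2*δ*a < 1) :
    HasDerivAt (logG δ) ((δ - 1 - 2*δ*(1-δ^2)*a) / (a * Sf δ a * (1 - (1-δ^2)*a))) a := by
  have hQ := radicand_pos (mul_pos hδ ha).le h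
  set s := Sf δ a with hs_def
  have hs : 0 < s := sqrt_pos.2 hQ
  have hsq : s^2 = 1 - 4*a + 4*(1-δ^2)*a^2 := sq_sqrt hQ.le
  have hlt : s < 1 - 2*a := Sf_lt_one_sub_two_mul (by positivity) (by nlinarith)
  have hS := hasDerivAt_Sf hQ
  have hlin : HasDerivAt (fun x : ℝ => 1 - 2*x) (-2) a := by
    simpa using ((hasDerivAt_id' a).const_mul 2).const_sub 1
  have hA : HasDerivAt (fun x => 1 - 2*x + Sf δ x) _ a := hlin.add hS
  have hB : HasDerivAt (fun x => 1 - 2*x - Sf δ x) _ a := hlin.sub hS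
  have hL := ((hA.log (by linarith)).sub (hB.log (by linarith))).add
    ((((hS.const_sub 1).log (by linarith)).sub ((hS.const_add 1).log (by linarith))).const_mul (1+δ))
  refine hL.congr_deriv ?_
  rw [← hs_def]
  set p := -2 + 4*(1-δ^2)*a with hp
  have hc : 0 < 1 - (1-δ^2)*a := by nlinarith
  set c := 1 - (1-δ^2)*a with hc_def
  have hAB : (1 - 2*a + s) * (1 - 2*a - s) = 4*δ^2*a^2 := by linear_combination -hsq
  have hUV : (1 - s) * (1 + s) = 4*a*c := by linear_combination -hsq
  have hA_sub_B : (-2 + p/s) / (1 - 2*a + s) - (-2 - p/s) / (1 - 2*a - s) = -2 / (a*s) := by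
    rw [div_sub_div _ _ (by linarith) (by linarith), hAB]
    field_simp
    linear_combination 4*hsq
  have hU_sub_V : -(p/s) / (1 - s) - p/s / (1 + s) = -p / (2*a*s*c) := by
    rw [div_sub_div _ _ (by linarith) (by linarith), hUV]
    field_simp
    ring
  rw [hA_sub_B, hU_sub_V]
  field_simp
  rw [hp, hc_def]
  ring

lemma logG_one_div_two_add_two_mul {δ : ℝ} (hδ : 1 + δ ≠ 0) : logG δ (1 / (2 + 2 * δ)) = 0 := by
  rw [logG, Sf_one_div_two_add_two_mul hδ]
  simp

section

variable {δ : ℝ} (hδ : 0 < δ)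
include hδ

lemma Sf_lt_of_mem_Ioc {a : ℝ} (ha : a ∈ Ioc 0 (1 / (2 + 2 * δ))) : Sf δ a < 1 - 2 * a := by
  have := (le_div_iff₀ (by positivity)).1 ha.2
  exact Sf_lt_one_sub_two_mul (mul_pos hδ ha.1).ne' (by nlinarith [ha.1])

lemma eqOn_G_exp_logG : EqOn (G δ) (exp ∘ logG δ) (Ioc 0 (1 / (2 + 2 * δ))) :=
  fun _ ha ↦ G_eq_exp_logG ha.1.le (Sf_lt_of_mem_Ioc hδ ha)

lemma continuousOn_logG : ContinuousOn (logG δ) (Ioc 0 (1 / (2 + 2 * δ))) :=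
  fun _ ha ↦ (continuousAt_logG ha.1.le (Sf_lt_of_mem_Ioc hδ ha)).continuousWithinAt

lemma G_one_div_two_add_two_mul : G δ (1 / (2 + 2 * δ)) = 1 := by
  rw [eqOn_G_exp_logG hδ (right_mem_Ioc.2 (by positivity)), Function.comp_apply,
    logG_one_div_two_add_two_mul (by positivity), exp_zero]

lemma continuousOn_G : ContinuousOn (G δ) (Ioc 0 (1 / (2 + 2 * δ))) :=
  (continuous_exp.comp_continuousOn (continuousOn_logG hδ)).congr (eqOn_G_exp_logG hδ)

end

lemma strictAntiOn_logG {δ : ℝ} (hδ : δ ∈ Ioo 0 1) :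
    StrictAntiOn (logG δ) (Ioc 0 (1 / (2 + 2 * δ))) := by
  obtain ⟨hδ0, hδ1⟩ := hδ
  refine strictAntiOn_of_deriv_neg (convex_Ioc _ _) (continuousOn_logG hδ0) fun a ha ↦ ?_
  rw [interior_Ioc] at ha
  have ha₀ := (lt_div_iff₀ (by positivity)).1 ha.2
  have hS : 0 < Sf δ a := sqrt_pos.2 (radicand_pos (mul_pos hδ0 ha.1).le (by linarith))
  rw [(hasDerivAt_logG hδ0 ha.1 (by linarith)).deriv]
  refine div_neg_of_neg_of_pos ?_ (mul_pos (mul_pos ha.1 hS) (by nlinarith))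
  nlinarith [mul_pos (mul_pos hδ0 ha.1) (show 0 < 1 - δ^2 by nlinarith)]

lemma strictAntiOn_G {δ : ℝ} (hδ : δ ∈ Ioo 0 1) :
    StrictAntiOn (G δ) (Ioc 0 (1 / (2 + 2 * δ))) :=
  (exp_strictMono.comp_strictAntiOn (strictAntiOn_logG hδ)).congr (eqOn_G_exp_logG hδ.1).symm

/-- `G` is strictly decreasing on `(0, 1/(2+2δ))`, tends to `1` at the right endpoint,
and hence exceeds `1` on the whole interval. -/
theorem G_strictAnti_and_limit (δ : ℝ) (hδ : δ ∈ Set.Ioo (0:ℝ) 1) :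
    StrictAntiOn (G δ) (Set.Ioo 0 (1/(2+2*δ))) ∧
    Tendsto (G δ) (nhdsWithin (1/(2+2*δ)) (Set.Ioo 0 (1/(2+2*δ)))) (nhds 1) ∧
    ∀ a ∈ Set.Ioo (0:ℝ) (1/(2+2*δ)), 1 < G δ a := by
  have hanti := strictAntiOn_G hδ
  have hend : 1 / (2 + 2 * δ) ∈ Ioc 0 (1 / (2 + 2 * δ)) :=
    right_mem_Ioc.2 (by have := hδ.1; positivity)
  have hG₀ := G_one_div_two_add_two_mul hδ.1
  have hlim := ((continuousOn_G hδ.1) _ hend |>.mono Ioo_subset_Ioc_self).tendsto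
  rw [hG₀] at hlim
  exact ⟨hanti.mono Ioo_subset_Ioc_self, hlim,
    fun a ha ↦ hG₀ ▸ hanti (Ioo_subset_Ioc_self ha) hend ha.2⟩
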